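/- Let 𝔤 be a finite-dimensional simple real Lie algebra equipped with an inner product ⟨·,·⟩, and let k be a nonzero real number. Then for every linear functional α : 𝔤 → ℝ there exists a unique element v ∈ 𝔤 such that α([x,y]) = k·⟨v,[x,y]⟩ for all x,y ∈ 𝔤; moreover this unique v satisfies α(x) = k·⟨v,x⟩ for all x ∈ 𝔤 whenever α is of that form. -/

import Mathlib

/-!
A simple Lie algebra is perfect, so a linear form vanishing on all brackets vanishes identically;
hence `v` is determined by the values `⟨v, [x, y]⟩`. Existence comes from `⟨·,·⟩` identifying `𝔤`
with its dual: take `v` with `⟨v, ·⟩ = k⁻¹ α`.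
-/

theorem LinearMap.BilinForm.nondegenerate_of_pos {R M : Type*} [CommSemiring R] [PartialOrder R]
    [AddCommMonoid M] [Module R M] {B : LinearMap.BilinForm R M} (hB : ∀ x, x ≠ 0 → 0 < B x x) :
    B.Nondegenerate :=
  ⟨fun x hx => by_contra fun h => (hB x h).ne' (hx x),
    fun y hy => by_contra fun h => (hB y h).ne' (hy y)⟩

namespace LieAlgebra.IsSimple

variable {R L : Type*} [CommRing R] [LieRing L] [LieAlgebra R L] [IsSimple R L]

theorem lie_top_eq_top : ⁅(⊤ : LieIdeal R L), (⊤ : LieIdeal R L)⁆ = ⊤ :=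
  (eq_bot_or_eq_top _).resolve_left fun h =>
    non_abelian R (L := L) ⟨fun x y => (LieSubmodule.lie_eq_bot_iff _ _).mp h x trivial y trivial⟩

theorem linearMap_eq_zero_of_map_lie_eq_zero {M : Type*} [AddCommGroup M] [Module R M]
    {f : L →ₗ[R] M} (hf : ∀ x y : L, f ⁅x, y⁆ = 0) : f = 0 := by
  have h : ⁅(⊤ : LieIdeal R L), (⊤ : LieIdeal R L)⁆.toSubmodule ≤ LinearMap.ker f := by
    rw [LieSubmodule.lieIdeal_oper_eq_linear_span', Submodule.span_le]
    rintro _ ⟨x, -, y, -, rfl⟩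
    exact hf x y
  rwa [lie_top_eq_top, LieSubmodule.top_toSubmodule, top_le_iff, LinearMap.ker_eq_top] at h

theorem eq_of_forall_apply_lie_eq {L' M : Type*} [AddCommGroup L'] [Module R L'] [AddCommGroup M]
    [Module R M] {B : L' →ₗ[R] L →ₗ[R] M} (hB : B.SeparatingLeft) {v v' : L'}
    (h : ∀ x y : L, B v ⁅x, y⁆ = B v' ⁅x, y⁆) : v = v' := by
  have hB_sub : B (v - v') = 0 :=
    linearMap_eq_zero_of_map_lie_eq_zero fun x y => by simp [h]
  exact sub_eq_zero.mp (hB _ fun y => by rw [hB_sub, LinearMap.zero_apply])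

end LieAlgebra.IsSimple

theorem unique_hamiltonian_vector_field_general
    {L : Type*} [LieRing L] [LieAlgebra ℝ L] [FiniteDimensional ℝ L]
    [LieAlgebra.IsSimple ℝ L]
    (B : L →ₗ[ℝ] L →ₗ[ℝ] ℝ)
    (hposdef : ∀ x : L, x ≠ 0 → 0 < B x x)
    (k : ℝ) (hk : k ≠ 0) :
    ∀ α : L →ₗ[ℝ] ℝ,
      (∃! v : L, ∀ x y : L, α ⁅x, y⁆ = k * B v ⁅x, y⁆) ∧
      (∀ v : L, (∀ x y : L, α ⁅x, y⁆ = k * B v ⁅x, y⁆) →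
        (∃ w : L, ∀ x : L, α x = k * B w x) →
        ∀ x : L, α x = k * B v x) := by
  intro α
  have hB : LinearMap.BilinForm.Nondegenerate B := LinearMap.BilinForm.nondegenerate_of_pos hposdef
  set w := (LinearMap.BilinForm.toDual B hB).symm (k⁻¹ • α)
  have hw : ∀ x, α x = k * B w x := fun x => by simp [w, hk]
  have hw_unique : ∀ v, (∀ x y : L, α ⁅x, y⁆ = k * B v ⁅x, y⁆) → v = w := fun v hv =>
    LieAlgebra.IsSimple.eq_of_forall_apply_lie_eq hB.1 fun x y =>
      mul_left_cancel₀ hk ((hv x y).symm.trans (hw _))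
  exact ⟨⟨w, fun x y => hw _, hw_unique⟩, fun v hv _ => hw_unique v hv ▸ hw⟩

/-- For a finite-dimensional simple real Lie algebra `L` with inner
product `B` and `k ≠ 0`: every linear functional `α` admits a unique `v ∈ L` with
`α([x,y]) = k·⟨v,[x,y]⟩` for all `x, y`; moreover this unique `v` satisfies
`α(x) = k·⟨v,x⟩` for all `x` whenever `α` is of the form `k·⟨w,·⟩` for some `w`. -/
theorem unique_hamiltonian_vector_field
    {L : Type*} [LieRing L] [LieAlgebra ℝ L] [FiniteDimensional ℝ L]
    [LieAlgebra.IsSimple ℝ L]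
    (B : L →ₗ[ℝ] L →ₗ[ℝ] ℝ)
    (hsymm : ∀ x y : L, B x y = B y x)
    (hposdef : ∀ x : L, x ≠ 0 → 0 < B x x)
    (k : ℝ) (hk : k ≠ 0) :
    ∀ α : L →ₗ[ℝ] ℝ,
      (∃! v : L, ∀ x y : L, α ⁅x, y⁆ = k * B v ⁅x, y⁆) ∧
      (∀ v : L, (∀ x y : L, α ⁅x, y⁆ = k * B v ⁅x, y⁆) →
        (∃ w : L, ∀ x : L, α x = k * B w x) →
        ∀ x : L, α x = k * B v x) :=
  unique_hamiltonian_vector_field_general B hposdef k hk
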